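/- arXiv:1607.04725 — 2 statements merged into one kernel-verified Lean document; each statement's English description precedes it below -/
import Mathlib

section
/- Let U be a uniformly random r-dimensional subspace of F_q^k and let X = {i \in {1,...,k} : e_i \in U}. For a fixed set S \subseteq {1,...,k} with |S| = x \le r, the probability that X = S equals (1 / [k choose r]_q) \cdot \sum_{j=0}^{k-x} (-1)^j \binom{k-x}{j} [k-x-j choose r-x-j]_q. -/
/-- The Gaussian binomial coefficient `[m, d]_q`. -/
def gaussBinom (q : ℕ) : ℕ → ℕ → ℕ
  | _, 0 => 1
  | 0, _ + 1 => 0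
  | m + 1, d + 1 => gaussBinom q m d + q ^ (d + 1) * gaussBinom q m (d + 1)

/-- Gaussian binomial with integer lower index, vanishing for negative index. -/
def gaussBinomZ (q m : ℕ) (d : ℤ) : ℕ :=
  if 0 ≤ d then gaussBinom q m d.toNat else 0

open Finset

/-! ### Algebraic identities for the Gaussian binomial -/

lemma prod_shift (q : ℤ) (m d : ℕ) :
    ∏ i ∈ range (d+1), (q^(m+1) - q^i) =
      (q^(m+1) - 1) * (q^d * ∏ i ∈ range d, (q^m - q^i)) := by
  rw [Finset.prod_range_succ']
  have : ∀ i ∈ range d, q^(m+1) - q^(i+1) = q * (q^m - q^i) := by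
    intro i _; ring
  rw [Finset.prod_congr rfl this, Finset.prod_mul_distrib, Finset.prod_const, card_range, pow_zero]
  ring

lemma gauss_mul_int (q : ℕ) (n : ℕ) : ∀ d : ℕ,
    (gaussBinom q n d : ℤ) * ∏ i ∈ range d, ((q:ℤ)^d - (q:ℤ)^i)
      = ∏ i ∈ range d, ((q:ℤ)^n - (q:ℤ)^i) := by
  induction n with
  | zero =>
    intro d
    cases d with
    | zero => simp [gaussBinom]
    | succ d =>
      have : ∏ i ∈ range (d+1), ((q:ℤ)^0 - (q:ℤ)^i) = 0 :=
        Finset.prod_eq_zero (mem_range.2 (Nat.succ_pos d)) (by simp)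
      rw [this]
      simp [gaussBinom]
  | succ n ih =>
    intro d
    cases d with
    | zero => simp [gaussBinom]
    | succ d =>
      have h1 := ih d
      have h2 := ih (d+1)
      rw [Finset.prod_range_succ (fun i => ((q:ℤ)^n - (q:ℤ)^i)) d] at h2
      rw [show gaussBinom q (n+1) (d+1)
        = gaussBinom q n d + q ^ (d + 1) * gaussBinom q n (d + 1) from rfl]
      rw [prod_shift, prod_shift] at *
      push_cast
      linear_combination ((q:ℤ)^d * ((q:ℤ)^(d+1) - 1)) * h1 + (q:ℤ)^(d+1) * h2

lemma gauss_zero (q : ℕ) : ∀ n d : ℕ, n < d → gaussBinom q n d = 0 := by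
  intro n
  induction n with
  | zero => intro d hd; cases d with
    | zero => omega
    | succ d => rfl
  | succ n ih => intro d hd; cases d with
    | zero => omega
    | succ d => show gaussBinom q n d + q ^ (d + 1) * gaussBinom q n (d + 1) = 0
                rw [ih d (by omega), ih (d+1) (by omega)]; ring

lemma cast_prod_sub (q m d : ℕ) (hq : 1 ≤ q) (hmd : d ≤ m) :
    ((∏ i ∈ range d, (q ^ m - q ^ i) : ℕ) : ℤ) = ∏ i ∈ range d, ((q:ℤ)^m - (q:ℤ)^i) := by
  rw [Nat.cast_prod]
  refine Finset.prod_congr rfl fun i hi => ?_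
  have : q ^ i ≤ q ^ m :=
    Nat.pow_le_pow_right hq (le_trans (Nat.le_of_lt (mem_range.1 hi)) hmd)
  push_cast [Nat.cast_sub this]
  ring

lemma prod_sub_ne_zero (q d : ℕ) (hq : 1 < q) :
    ∏ i ∈ range d, ((q:ℤ)^d - (q:ℤ)^i) ≠ 0 := by
  rw [Finset.prod_ne_zero_iff]
  intro i hi
  have : (q:ℤ)^i < (q:ℤ)^d := by
    apply pow_lt_pow_right₀ (by exact_mod_cast hq) (mem_range.1 hi)
  exact sub_ne_zero.2 (ne_of_gt this)

/-! ### Counting subspaces of a fixed dimension -/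

section count
variable {F V : Type*} [Field F] [Fintype F] [AddCommGroup V] [Module F V] [Finite V]

local notation "q" => Fintype.card F

instance : Finite (Submodule F V) :=
  Finite.of_injective (fun U : Submodule F V => (U : Set V)) SetLike.coe_injective

noncomputable def fiberEquiv (d : ℕ) (U : {U : Submodule F V // Module.finrank F U = d}) :
    { x : { s : Fin d → V // LinearIndependent F s } //
        (⟨Submodule.span F (Set.range x.1), by rw [finrank_span_eq_card x.2, Fintype.card_fin]⟩
          : {U : Submodule F V // Module.finrank F U = d}) = U } ≃
      { t : Fin d → U.1 // LinearIndependent F t } where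
  toFun x := ⟨fun i => ⟨x.1.1 i, by
      have h : Submodule.span F (Set.range x.1.1) = U.1 := congrArg Subtype.val x.2
      exact h ▸ Submodule.subset_span (Set.mem_range_self i)⟩,
    LinearIndependent.of_comp U.1.subtype x.1.2⟩
  invFun t := ⟨⟨fun i => (t.1 i : V), t.2.map' U.1.subtype (Submodule.ker_subtype U.1)⟩, by
    apply Subtype.ext
    have : Module.Finite F U.1 := Module.Finite.of_finite
    have h1 : Submodule.span F (Set.range t.1) = ⊤ :=
      Submodule.eq_top_of_finrank_eq
        (by rw [finrank_span_eq_card t.2, Fintype.card_fin, U.2])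
    have h2 : Set.range (fun i => (t.1 i : V)) = U.1.subtype '' Set.range t.1 := by
      rw [← Set.range_comp]; rfl
    show Submodule.span F (Set.range fun i => (t.1 i : V)) = U.1
    rw [h2, Submodule.span_image, h1, Submodule.map_top, Submodule.range_subtype]⟩
  left_inv x := Subtype.ext (Subtype.ext rfl)
  right_inv t := Subtype.ext rfl

lemma card_rank_subspaces_mul (d : ℕ) (hd : d ≤ Module.finrank F V) :
    Nat.card {U : Submodule F V // Module.finrank F U = d}
        * ∏ i ∈ range d, (q ^ d - q ^ i)
      = ∏ i ∈ range d, (q ^ Module.finrank F V - q ^ i) := by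
  classical
  have := Fintype.ofFinite V
  have key := card_linearIndependent (K := F) (V := V) hd
  rw [← Finset.prod_range (fun i => q ^ Module.finrank F V - q ^ i)] at key
  set f : { s : Fin d → V // LinearIndependent F s } →
      {U : Submodule F V // Module.finrank F U = d} :=
    fun x => ⟨Submodule.span F (Set.range x.1), by rw [finrank_span_eq_card x.2, Fintype.card_fin]⟩
    with hf
  haveI := Fintype.ofFinite {U : Submodule F V // Module.finrank F U = d}
  haveI inst2 : ∀ U : {U : Submodule F V // Module.finrank F U = d},
      Fintype {x // f x = U} := fun U => Fintype.ofFinite _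
  have hsig : Nat.card { s : Fin d → V // LinearIndependent F s }
      = Nat.card {U : Submodule F V // Module.finrank F U = d}
        * ∏ i ∈ range d, (q ^ d - q ^ i) := by
    rw [← Nat.card_congr (Equiv.sigmaFiberEquiv f),
      Nat.card_eq_fintype_card (α := Σ U : {U : Submodule F V // Module.finrank F U = d},
        {x // f x = U}), Fintype.card_sigma]
    have hU : ∀ U : {U : Submodule F V // Module.finrank F U = d},
        Fintype.card {x // f x = U} = ∏ i ∈ range d, (q ^ d - q ^ i) := by
      intro U
      rw [← Nat.card_eq_fintype_card, Nat.card_congr (fiberEquiv d U)]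
      have := card_linearIndependent (K := F) (V := U.1) (k := d) (by rw [U.2])
      rw [this, U.2, Finset.prod_range]
    rw [Finset.sum_congr rfl (fun U _ => hU U), Finset.sum_const, Finset.card_univ,
      Nat.card_eq_fintype_card, smul_eq_mul]
  rw [← hsig, key]

lemma card_rank_subspaces (d : ℕ) :
    Nat.card {U : Submodule F V // Module.finrank F U = d}
      = gaussBinom q (Module.finrank F V) d := by
  have hq : 1 < q := Fintype.one_lt_card
  rcases le_or_gt d (Module.finrank F V) with hd | hd
  · have h := card_rank_subspaces_mul (F := F) (V := V) d hd
    have hz : (Nat.card {U : Submodule F V // Module.finrank F U = d} : ℤ)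
        * ∏ i ∈ range d, ((q:ℤ)^d - (q:ℤ)^i)
        = ∏ i ∈ range d, ((q:ℤ)^(Module.finrank F V) - (q:ℤ)^i) := by
      rw [← cast_prod_sub q d d hq.le le_rfl, ← cast_prod_sub q (Module.finrank F V) d hq.le hd,
        ← Nat.cast_mul, h]
    have hg := gauss_mul_int q (Module.finrank F V) d
    have := mul_right_cancel₀ (prod_sub_ne_zero q d hq) (hz.trans hg.symm)
    exact_mod_cast this
  · have := Fintype.ofFinite V
    have : Module.Finite F V := Module.Finite.of_finite
    have he : IsEmpty {U : Submodule F V // Module.finrank F U = d} := by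
      constructor
      rintro ⟨U, hU⟩
      have := Submodule.finrank_le U
      omega
    rw [Nat.card_of_isEmpty, gauss_zero q _ d hd]

lemma finrank_map_mkQ_add (W U : Submodule F V) (h : W ≤ U) :
    Module.finrank F (U.map W.mkQ) + Module.finrank F W = Module.finrank F U := by
  have : Fintype V := Fintype.ofFinite V
  have : Module.Finite F V := Module.Finite.of_finite
  have hr : LinearMap.range (W.mkQ.comp U.subtype) = U.map W.mkQ := by
    rw [LinearMap.range_comp, Submodule.range_subtype]
  have hk : LinearMap.ker (W.mkQ.comp U.subtype) = Submodule.comap U.subtype W := by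
    rw [LinearMap.ker_comp, Submodule.ker_mkQ]
  have h2 := LinearMap.finrank_range_add_finrank_ker (W.mkQ.comp U.subtype)
  rw [hr, hk] at h2
  rw [← h2]
  congr 1
  exact (Submodule.comapSubtypeEquivOfLe h).finrank_eq.symm

lemma card_superset_subspaces (W : Submodule F V) (r : ℕ) (hW : Module.finrank F W ≤ r) :
    Nat.card {U : Submodule F V // Module.finrank F U = r ∧ W ≤ U}
      = gaussBinom q (Module.finrank F V - Module.finrank F W) (r - Module.finrank F W) := by
  have : Fintype V := Fintype.ofFinite V
  have : Module.Finite F V := Module.Finite.of_finite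
  have E : {U : Submodule F V // Module.finrank F U = r ∧ W ≤ U} ≃
      {U' : Submodule F (V ⧸ W) // Module.finrank F U' = r - Module.finrank F W} := by
    refine ⟨fun U => ⟨U.1.map W.mkQ, ?_⟩, fun U' => ⟨Submodule.comap W.mkQ U'.1, ?_, ?_⟩, ?_, ?_⟩
    · have := finrank_map_mkQ_add W U.1 U.2.2
      have := U.2.1
      omega
    · have hle : W ≤ Submodule.comap W.mkQ U'.1 := Submodule.le_comap_mkQ W U'.1
      have hmap : (Submodule.comap W.mkQ U'.1).map W.mkQ = U'.1 :=
        Submodule.map_comap_eq_self (by simp)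
      have h3 := finrank_map_mkQ_add W (Submodule.comap W.mkQ U'.1) hle
      rw [hmap, U'.2] at h3
      omega
    · exact Submodule.le_comap_mkQ W U'.1
    · intro U
      apply Subtype.ext
      show Submodule.comap W.mkQ (Submodule.map W.mkQ U.1) = U.1
      rw [Submodule.comap_map_mkQ, sup_eq_right.2 U.2.2]
    · intro U'
      apply Subtype.ext
      show Submodule.map W.mkQ (Submodule.comap W.mkQ U'.1) = U'.1
      exact Submodule.map_comap_eq_self (by simp)
  rw [Nat.card_congr E, card_rank_subspaces]
  congr 1
  have := Submodule.finrank_quotient_add_finrank W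
  omega

end count

/-! ### Inclusion–exclusion machinery -/

lemma sum_neg_one_pow_interval {k : ℕ} (S T' : Finset (Fin k)) (hS : S ⊆ T') :
    ∑ T ∈ univ.filter (fun T => S ⊆ T ∧ T ⊆ T'), (-1:ℚ)^(T.card - S.card)
      = if T' = S then 1 else 0 := by
  classical
  have : ∑ T ∈ univ.filter (fun T => S ⊆ T ∧ T ⊆ T'), (-1:ℚ)^(T.card - S.card)
      = ∑ R ∈ (T' \ S).powerset, (-1:ℚ)^R.card := by
    refine Finset.sum_nbij' (fun T => T \ S) (fun R => S ∪ R) ?_ ?_ ?_ ?_ ?_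
    · intro T hT
      rw [mem_filter] at hT
      exact mem_powerset.2 (sdiff_subset_sdiff hT.2.2 Subset.rfl)
    · intro R hR
      rw [mem_powerset] at hR
      refine mem_filter.2 ⟨mem_univ _, subset_union_left, union_subset hS (hR.trans sdiff_subset)⟩
    · intro T hT
      rw [mem_filter] at hT
      exact union_sdiff_of_subset hT.2.1
    · intro R hR
      rw [mem_powerset] at hR
      exact union_sdiff_cancel_left (disjoint_of_subset_right hR sdiff_disjoint.symm)
    · intro T hT
      rw [mem_filter] at hT
      rw [card_sdiff_of_subset hT.2.1]
  rw [this]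
  have h2 : ∑ R ∈ (T' \ S).powerset, (-1:ℚ)^R.card = if T' \ S = ∅ then 1 else 0 := by
    have := Finset.sum_powerset_neg_one_pow_card (x := T' \ S)
    exact_mod_cast congrArg (fun z : ℤ => (z : ℚ)) this
  rw [h2]
  have h3 : T' \ S = ∅ ↔ T' = S := by
    rw [sdiff_eq_empty_iff_subset]
    exact ⟨fun h => subset_antisymm h hS, fun h => h.le⟩
  simp [h3]

lemma moebius_inv {k : ℕ} (g h : Finset (Fin k) → ℚ)
    (hgh : ∀ T, g T = ∑ T' ∈ univ.filter (fun T' => T ⊆ T'), h T') (S : Finset (Fin k)) :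
    ∑ T ∈ univ.filter (fun T => S ⊆ T), (-1:ℚ)^(T.card - S.card) * g T = h S := by
  classical
  have step1 : ∑ T ∈ univ.filter (fun T => S ⊆ T), (-1:ℚ)^(T.card - S.card) * g T
      = ∑ T : Finset (Fin k), ∑ T' : Finset (Fin k),
          (if S ⊆ T ∧ T ⊆ T' then (-1:ℚ)^(T.card - S.card) * h T' else 0) := by
    rw [Finset.sum_filter]
    refine Finset.sum_congr rfl fun T _ => ?_
    by_cases hT : S ⊆ T
    · rw [if_pos hT, hgh T, Finset.mul_sum, Finset.sum_filter]
      refine Finset.sum_congr rfl fun T' _ => ?_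
      by_cases h2 : T ⊆ T'
      · rw [if_pos h2, if_pos ⟨hT, h2⟩]
      · rw [if_neg h2, if_neg (fun hc : S ⊆ T ∧ T ⊆ T' => h2 hc.2)]
    · rw [if_neg hT]
      exact (Finset.sum_eq_zero fun T' _ => if_neg (fun hc => hT hc.1)).symm
  have step2 : ∀ T' : Finset (Fin k),
      ∑ T : Finset (Fin k), (if S ⊆ T ∧ T ⊆ T' then (-1:ℚ)^(T.card - S.card) * h T' else 0)
        = (if S ⊆ T' then (if T' = S then (1:ℚ) else 0) else 0) * h T' := by
    intro T'
    rw [← Finset.sum_filter, ← Finset.sum_mul]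
    by_cases hST : S ⊆ T'
    · rw [if_pos hST, sum_neg_one_pow_interval S T' hST]
    · rw [if_neg hST]
      have he : univ.filter (fun T => S ⊆ T ∧ T ⊆ T') = ∅ :=
        Finset.filter_eq_empty_iff.2 fun {T} _ hc => hST (hc.1.trans hc.2)
      rw [he, Finset.sum_empty, zero_mul]
  rw [step1, Finset.sum_comm]
  rw [Finset.sum_congr rfl (fun T' _ => step2 T')]
  rw [Finset.sum_eq_single S (fun T' _ hT' => by simp [hT']) (fun hs => absurd (mem_univ S) hs)]
  simp

lemma sum_superset_reindex {k : ℕ} (S : Finset (Fin k)) (f : Finset (Fin k) → ℚ) :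
    ∑ T ∈ univ.filter (fun T => S ⊆ T), f T = ∑ R ∈ (univ \ S).powerset, f (S ∪ R) := by
  classical
  refine Finset.sum_nbij' (fun T => T \ S) (fun R => S ∪ R) ?_ ?_ ?_ ?_ ?_
  · intro T hT
    rw [mem_filter] at hT
    exact mem_powerset.2 (sdiff_subset_sdiff (subset_univ T) Subset.rfl)
  · intro R hR
    exact mem_filter.2 ⟨mem_univ _, subset_union_left⟩
  · intro T hT
    rw [mem_filter] at hT
    exact union_sdiff_of_subset hT.2
  · intro R hR
    rw [mem_powerset] at hR
    exact union_sdiff_cancel_left (disjoint_of_subset_right hR sdiff_disjoint.symm)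
  · intro T hT
    rw [mem_filter] at hT
    rw [union_sdiff_of_subset hT.2]

/-! ### Concrete lemmas in `Fin k → F` -/

section conc
variable {F : Type*} [Field F] [Fintype F] {k : ℕ}

local notation "q" => Fintype.card F

omit [Fintype F] in
lemma finrank_span_single (T : Finset (Fin k)) :
    Module.finrank F (Submodule.span F
      ((fun i => (Pi.single i (1:F) : Fin k → F)) '' (T : Set (Fin k)))) = T.card := by
  classical
  have hli : LinearIndependent F
      (fun i : ↥(↑T : Set (Fin k)) => (Pi.single (i : Fin k) (1:F) : Fin k → F)) := by
    have h1 := (Pi.basisFun F (Fin k)).linearIndependent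
    have h2 := h1.comp (Subtype.val : ↥(↑T : Set (Fin k)) → Fin k) Subtype.val_injective
    simpa [Pi.basisFun_apply, Function.comp_def] using h2
  rw [Set.image_eq_range (fun i => (Pi.single i (1:F) : Fin k → F)) (↑T : Set (Fin k)),
    finrank_span_eq_card hli]
  simp

lemma card_superset_single (r : ℕ) (hrk : r ≤ k) (T : Finset (Fin k)) (hT : T.card ≤ r) :
    Nat.card {U : Submodule F (Fin k → F) //
        Module.finrank F U = r ∧ ∀ i ∈ T, Pi.single i (1:F) ∈ U}
      = gaussBinom q (k - T.card) (r - T.card) := by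
  classical
  set W : Submodule F (Fin k → F) :=
    Submodule.span F ((fun i => (Pi.single i (1:F) : Fin k → F)) '' (T : Set (Fin k))) with hW
  have hcond : ∀ U : Submodule F (Fin k → F),
      ((∀ i ∈ T, Pi.single i (1:F) ∈ U) ↔ W ≤ U) := by
    intro U
    rw [hW, Submodule.span_le, Set.image_subset_iff]
    constructor
    · intro h i hi
      exact h i (by simpa using hi)
    · intro h i hi
      exact h (by simpa using hi)
  have E : {U : Submodule F (Fin k → F) //
        Module.finrank F U = r ∧ ∀ i ∈ T, Pi.single i (1:F) ∈ U}
      ≃ {U : Submodule F (Fin k → F) // Module.finrank F U = r ∧ W ≤ U} :=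
    Equiv.subtypeEquivRight (fun U => and_congr_right fun _ => hcond U)
  have hWr : Module.finrank F W = T.card := finrank_span_single T
  rw [Nat.card_congr E, card_superset_subspaces W r (by rw [hWr]; exact hT), hWr,
    Module.finrank_fintype_fun_eq_card, Fintype.card_fin]

lemma card_superset_single_zero (r : ℕ) (T : Finset (Fin k)) (hT : r < T.card) :
    Nat.card {U : Submodule F (Fin k → F) //
        Module.finrank F U = r ∧ ∀ i ∈ T, Pi.single i (1:F) ∈ U} = 0 := by
  classical
  set W : Submodule F (Fin k → F) :=
    Submodule.span F ((fun i => (Pi.single i (1:F) : Fin k → F)) '' (T : Set (Fin k))) with hW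
  have he : IsEmpty {U : Submodule F (Fin k → F) //
      Module.finrank F U = r ∧ ∀ i ∈ T, Pi.single i (1:F) ∈ U} := by
    constructor
    rintro ⟨U, hU, hsub⟩
    have hle : W ≤ U := by
      rw [hW, Submodule.span_le, Set.image_subset_iff]
      intro i hi
      exact hsub i (by simpa using hi)
    have h1 : Module.finrank F W ≤ Module.finrank F U := Submodule.finrank_mono hle
    rw [finrank_span_single T, hU] at h1
    omega
  rw [Nat.card_of_isEmpty]

end conc

/-! ### Main theorem -/

/-- For a uniformly random `r`-dimensional subspace `U` of `F_q^k`, with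
`X = {i : e_i ∈ U}` and a fixed `S ⊆ {1,…,k}` with `|S| = x ≤ r`, the probability
that `X = S` equals `(1/[k,r]_q) ∑_{j=0}^{k-x} (-1)^j C(k-x,j) [k-x-j, r-x-j]_q`. -/
theorem prob_unit_vector_set_eq {q k x r : ℕ} (F : Type*) [Field F] [Fintype F]
    (hF : Fintype.card F = q) (hxr : x ≤ r) (hrk : r ≤ k)
    (S : Finset (Fin k)) (hS : S.card = x) :
    ({U : Submodule F (Fin k → F) |
        Module.finrank F U = r ∧ {i | Pi.single i (1 : F) ∈ U} = ↑S}.ncard : ℚ)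
      / ({U : Submodule F (Fin k → F) | Module.finrank F U = r}.ncard : ℚ)
    = (1 / (gaussBinom q k r : ℚ)) *
        ∑ j ∈ Finset.range (k - x + 1),
          (-1 : ℚ) ^ j * ((k - x).choose j : ℚ) *
            (gaussBinomZ q (k - x - j) ((r : ℤ) - x - j) : ℚ) := by
  classical
  subst hF
  subst hS
  haveI : Fintype (Submodule F (Fin k → F)) := Fintype.ofFinite _
  set XF : Submodule F (Fin k → F) → Finset (Fin k) :=
    fun U => univ.filter (fun i => Pi.single i (1:F) ∈ U) with hXF
  have hXFcoe : ∀ U : Submodule F (Fin k → F),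
      ({i | Pi.single i (1:F) ∈ U} : Set (Fin k)) = ↑(XF U) := by
    intro U
    ext i
    simp [hXF]
  set hc : Finset (Fin k) → ℕ := fun T =>
    (univ.filter fun U : Submodule F (Fin k → F) =>
      Module.finrank F U = r ∧ XF U = T).card with hhc
  set gc : Finset (Fin k) → ℕ := fun T =>
    (univ.filter fun U : Submodule F (Fin k → F) =>
      Module.finrank F U = r ∧ ∀ i ∈ T, Pi.single i (1:F) ∈ U).card with hgc
  -- numerator is `hc S`
  have hnum : {U : Submodule F (Fin k → F) |
      Module.finrank F U = r ∧ {i | Pi.single i (1 : F) ∈ U} = ↑S}.ncard = hc S := by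
    rw [Set.ncard_eq_toFinset_card', Set.toFinset_setOf,
      show hc S = (univ.filter fun U : Submodule F (Fin k → F) =>
        Module.finrank F U = r ∧ XF U = S).card from rfl]
    congr 1
    refine Finset.filter_congr fun U _ => ?_
    rw [hXFcoe U]
    exact and_congr_right fun _ => Finset.coe_inj
  -- denominator
  have hden : {U : Submodule F (Fin k → F) | Module.finrank F U = r}.ncard
      = gaussBinom (Fintype.card F) k r := by
    rw [Set.ncard_eq_toFinset_card', Set.toFinset_setOf, ← Fintype.card_subtype,
      ← Nat.card_eq_fintype_card, card_rank_subspaces,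
      Module.finrank_fintype_fun_eq_card, Fintype.card_fin]
  -- fiberwise decomposition
  have hfib : ∀ T : Finset (Fin k),
      (gc T : ℚ) = ∑ T' ∈ univ.filter (fun T' => T ⊆ T'), (hc T' : ℚ) := by
    intro T
    have hmaps : ∀ U ∈ (univ.filter fun U : Submodule F (Fin k → F) =>
        Module.finrank F U = r ∧ ∀ i ∈ T, Pi.single i (1:F) ∈ U),
        XF U ∈ univ.filter (fun T' => T ⊆ T') := by
      intro U hU
      rw [mem_filter] at hU ⊢
      refine ⟨mem_univ _, fun i hi => ?_⟩
      simp only [hXF, mem_filter]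
      exact ⟨mem_univ _, hU.2.2 i hi⟩
    have hcount := Finset.card_eq_sum_card_fiberwise hmaps
    have hthis : gc T = ∑ T' ∈ univ.filter (fun T' => T ⊆ T'), hc T' := by
      show (univ.filter fun U : Submodule F (Fin k → F) =>
        Module.finrank F U = r ∧ ∀ i ∈ T, Pi.single i (1:F) ∈ U).card = _
      rw [hcount]
      refine Finset.sum_congr rfl fun T' hT' => ?_
      rw [mem_filter] at hT'
      rw [show hc T' = (univ.filter fun U : Submodule F (Fin k → F) =>
        Module.finrank F U = r ∧ XF U = T').card from rfl]
      congr 1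
      ext U
      simp only [mem_filter, mem_univ, true_and]
      constructor
      · rintro ⟨⟨h1, _⟩, h3⟩; exact ⟨h1, h3⟩
      · rintro ⟨h1, h3⟩
        refine ⟨⟨h1, fun i hi => ?_⟩, h3⟩
        have hm2 : i ∈ XF U := h3 ▸ hT'.2 hi
        simp only [hXF, mem_filter] at hm2
        exact hm2.2
    rw [hthis]
    push_cast
    rfl
  -- value of gc
  have hgval : ∀ T : Finset (Fin k), (gc T : ℚ)
      = if T.card ≤ r then
          (gaussBinom (Fintype.card F) (k - T.card) (r - T.card) : ℚ) else 0 := by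
    intro T
    have hsub : gc T = Nat.card {U : Submodule F (Fin k → F) //
        Module.finrank F U = r ∧ ∀ i ∈ T, Pi.single i (1:F) ∈ U} := by
      rw [hgc, Nat.card_eq_fintype_card, Fintype.card_subtype]
    split_ifs with h
    · rw [hsub, card_superset_single r hrk T h]
    · rw [hsub, card_superset_single_zero r T (lt_of_not_ge h)]
      simp
  -- inversion
  have hinv := moebius_inv (fun T => (gc T : ℚ)) (fun T => (hc T : ℚ)) hfib S
  -- reindex and group by size
  have hm : (univ \ S).card = k - S.card := by
    rw [card_sdiff_of_subset (subset_univ S), card_univ, Fintype.card_fin]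
  have hsum : (hc S : ℚ)
      = ∑ j ∈ Finset.range (k - S.card + 1),
          (-1 : ℚ) ^ j * ((k - S.card).choose j : ℚ) *
            (gaussBinomZ (Fintype.card F) (k - S.card - j) ((r : ℤ) - S.card - j) : ℚ) := by
    rw [← hinv, sum_superset_reindex S (fun T => (-1:ℚ)^(T.card - S.card) * (gc T))]
    have hper : ∀ R ∈ (univ \ S).powerset,
        (-1:ℚ)^((S ∪ R).card - S.card) * (gc (S ∪ R) : ℚ)
        = (fun j => (-1:ℚ)^j *
            (if S.card + j ≤ r then
              (gaussBinom (Fintype.card F) (k - (S.card + j)) (r - (S.card + j)) : ℚ)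
            else 0)) R.card := by
      intro R hR
      rw [mem_powerset] at hR
      have hd : Disjoint S R := disjoint_of_subset_right hR sdiff_disjoint.symm
      have hcU : (S ∪ R).card = S.card + R.card := card_union_of_disjoint hd
      rw [hgval (S ∪ R), hcU, Nat.add_sub_cancel_left]
    rw [Finset.sum_congr rfl hper]
    rw [Finset.sum_powerset_apply_card (f := fun j => (-1:ℚ)^j *
        (if S.card + j ≤ r then
          (gaussBinom (Fintype.card F) (k - (S.card + j)) (r - (S.card + j)) : ℚ)
        else 0)) (x := univ \ S), hm]
    refine Finset.sum_congr rfl fun j hj => ?_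
    rw [mem_range] at hj
    rw [nsmul_eq_mul]
    have hval : (if S.card + j ≤ r then
        (gaussBinom (Fintype.card F) (k - (S.card + j)) (r - (S.card + j)) : ℚ) else 0)
        = (gaussBinomZ (Fintype.card F) (k - S.card - j) ((r : ℤ) - S.card - j) : ℚ) := by
      split_ifs with h
      · have h1 : k - (S.card + j) = k - S.card - j := by omega
        have h2 : (0:ℤ) ≤ (r : ℤ) - S.card - j := by omega
        have h3 : ((r : ℤ) - S.card - j).toNat = r - (S.card + j) := by omega
        rw [gaussBinomZ, if_pos h2, h3, h1]
      · have h2 : ¬ (0:ℤ) ≤ (r : ℤ) - S.card - j := by omega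
        rw [gaussBinomZ, if_neg h2]
        simp
    rw [hval]
    ring
  rw [hnum, hden, hsum]
  ring
end

section
/- Nonnegativity of the alternating sum: for all integers 0 \le x \le r \le k and prime power q, \sum_{j=0}^{k-x} (-1)^j \binom{k-x}{j} [k-x-j choose r-x-j]_q \ge 0, since it counts the r-dimensional subspaces of F_q^k whose set of contained standard unit vectors is exactly a fixed x-element set. -/
lemma gauss_zero_s16 (q m : ℕ) : gaussBinom q m 0 = 1 := by cases m <;> rfl

lemma gauss_zero_of_lt (q : ℕ) : ∀ m d, m < d → gaussBinom q m d = 0 := by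
  intro m
  induction m with
  | zero => intro d hd; cases d with
    | zero => omega
    | succ e => rfl
  | succ m ih =>
    intro d hd
    cases d with
    | zero => omega
    | succ e =>
      show gaussBinom q m e + q ^ (e+1) * gaussBinom q m (e+1) = 0
      rw [ih e (by omega), ih (e+1) (by omega)]
      ring

lemma gauss_self (q : ℕ) : ∀ m, gaussBinom q m m = 1 := by
  intro m
  induction m with
  | zero => rfl
  | succ m ih =>
    show gaussBinom q m m + q ^ (m+1) * gaussBinom q m (m+1) = 1
    rw [ih, gauss_zero_of_lt q m (m+1) (by omega)]
    ring

lemma gauss_abs (q : ℕ) : ∀ n k, k ≤ n →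
    gaussBinom q n k + q ^ (k+1) * gaussBinom q n (k+1)
      = gaussBinom q n (k+1) + q ^ (n-k) * gaussBinom q n k := by
  intro n
  induction n with
  | zero =>
    intro k hk
    interval_cases k
    simp [gauss_zero_s16, gauss_zero_of_lt q 0 1 (by omega)]
  | succ n ih =>
    intro k hk
    rcases Nat.lt_or_ge k (n+1) with h | h
    · have hkn : k ≤ n := by omega
      cases k with
      | zero =>
        have e1 := ih 0 (by omega)
        show gaussBinom q (n+1) 0 + q ^ 1 * (gaussBinom q n 0 + q ^ 1 * gaussBinom q n 1)
            = (gaussBinom q n 0 + q ^ 1 * gaussBinom q n 1) + q ^ (n+1-0) * gaussBinom q (n+1) 0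
        rw [gauss_zero_s16, gauss_zero_s16] at *
        have hp : q ^ (n + 1 - 0) = q * q ^ (n - 0) := by
          rw [← pow_succ']; congr 1
        rw [hp]
        zify at *
        linear_combination (q : ℤ) * e1
      | succ j =>
        have e1 := ih j (by omega)
        have e2 := ih (j+1) (by omega)
        show (gaussBinom q n j + q ^ (j+1) * gaussBinom q n (j+1))
              + q ^ (j+2) * (gaussBinom q n (j+1) + q ^ (j+2) * gaussBinom q n (j+2))
            = (gaussBinom q n (j+1) + q ^ (j+2) * gaussBinom q n (j+2))
              + q ^ (n+1-(j+1)) * (gaussBinom q n j + q ^ (j+1) * gaussBinom q n (j+1))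
        have hx : n + 1 - (j+1) = n - j := by omega
        rw [hx]
        have r1 : q ^ (j+2) * q ^ (n-(j+1)) = q ^ (j+1) * q ^ (n-j) := by
          rw [← pow_add, ← pow_add]; congr 1; omega
        zify at *
        linear_combination e1 + (q:ℤ) ^ (j+2) * e2 + (gaussBinom q n (j+1) : ℤ) * r1
    · have hk1 : k = n + 1 := by omega
      subst hk1
      rw [gauss_self, gauss_zero_of_lt q (n+1) (n+2) (by omega)]
      simp

lemma gauss_pascal2 (q a d : ℕ) (hd : d ≤ a) :
    gaussBinom q (a+1) (d+1) = gaussBinom q a (d+1) + q ^ (a-d) * gaussBinom q a d := by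
  show gaussBinom q a d + q ^ (d+1) * gaussBinom q a (d+1) = _
  exact gauss_abs q a d hd



lemma gz_nat (q m c : ℕ) : gaussBinomZ q m (c : ℤ) = gaussBinom q m c := by
  simp [gaussBinomZ]

lemma gz_neg (q m : ℕ) {d : ℤ} (hd : d < 0) : gaussBinomZ q m d = 0 := by
  simp [gaussBinomZ, not_le.mpr hd]

lemma gz_pascal (q n m j : ℕ) (hm : m ≤ n) (hj : j ≤ n) :
    (gaussBinomZ q (n+1-j) ((m:ℤ)+1-j) : ℤ)
      = gaussBinomZ q (n-j) ((m:ℤ)+1-j) + q ^ (n-m) * gaussBinomZ q (n-j) ((m:ℤ)-j) := by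
  rcases Nat.lt_or_ge m j with h | h
  · rcases Nat.lt_or_ge (m+1) j with h1 | h1
    · rw [gz_neg q _ (by omega), gz_neg q _ (by omega), gz_neg q _ (by omega)]
      simp
    · have hj1 : j = m + 1 := by omega
      subst hj1
      have e1 : (m:ℤ)+1-((m+1:ℕ):ℤ) = ((0:ℕ):ℤ) := by push_cast; ring
      rw [show ((m+1:ℕ):ℤ) = (m:ℤ)+1 by push_cast; ring] at e1 ⊢
      rw [e1, gz_nat, gz_nat, gz_neg q _ (by omega)]
      rw [gauss_zero_s16, gauss_zero_s16]; simp
  · have e1 : (m:ℤ)+1-j = (((m-j)+1 : ℕ):ℤ) := by push_cast; omega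
    have e2 : (m:ℤ)-j = (((m-j) : ℕ):ℤ) := by push_cast; omega
    rw [e1, e2, gz_nat, gz_nat, gz_nat]
    have e3 : n + 1 - j = (n - j) + 1 := by omega
    rw [e3, gauss_pascal2 q (n-j) (m-j) (by omega), show n - j - (m - j) = n - m by omega]
    push_cast
    ring

def Sf (q n m : ℕ) : ℤ :=
  ∑ j ∈ Finset.range (n+1),
    (-1 : ℤ) ^ j * (n.choose j : ℤ) * (gaussBinomZ q (n-j) ((m:ℤ) - j) : ℤ)

lemma Sf_zero (q n : ℕ) : Sf q n 0 = 1 := by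
  unfold Sf
  rw [Finset.sum_eq_single 0]
  · rw [show ((0:ℕ):ℤ) - ((0:ℕ):ℤ) = ((0:ℕ):ℤ) by simp, gz_nat, gauss_zero_s16]; simp
  · intro j hj hj0
    rw [gz_neg q _ (by omega)]
    simp
  · intro h; simp at h

lemma Sf_of_gt (q n m : ℕ) (h : n < m) : Sf q n m = 0 := by
  unfold Sf
  apply Finset.sum_eq_zero
  intro j hj
  simp only [Finset.mem_range] at hj
  rcases Nat.lt_or_ge m j with h1 | h1
  · rw [gz_neg q _ (by omega)]; simp
  · rw [show (m:ℤ)-j = (((m-j) : ℕ):ℤ) by push_cast; omega, gz_nat,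
      gauss_zero_of_lt q _ _ (by omega)]
    simp

lemma Sf_rec (q n m : ℕ) (hm : m ≤ n) :
    Sf q (n+1) (m+1) = Sf q n (m+1) + ((q:ℤ) ^ (n-m) - 1) * Sf q n m := by
  have hA : (∑ j ∈ Finset.range (n+1),
        (-1 : ℤ) ^ j * (n.choose j : ℤ) * (gaussBinomZ q (n+1-j) ((m:ℤ)+1-j) : ℤ))
      = Sf q n (m+1) + (q:ℤ) ^ (n-m) * Sf q n m := by
    unfold Sf
    rw [Finset.mul_sum, ← Finset.sum_add_distrib]
    apply Finset.sum_congr rfl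
    intro j hj
    simp only [Finset.mem_range] at hj
    rw [gz_pascal q n m j hm (by omega)]
    rw [show ((m+1:ℕ):ℤ) - (j:ℤ) = (m:ℤ)+1-j by push_cast; ring]
    push_cast
    ring
  have step : Sf q (n+1) (m+1)
      = (∑ j ∈ Finset.range (n+1),
          (-1 : ℤ) ^ j * (n.choose j : ℤ) * (gaussBinomZ q (n+1-j) ((m:ℤ)+1-j) : ℤ))
        - Sf q n m := by
    unfold Sf
    set f : ℕ → ℤ := fun j => (-1 : ℤ) ^ j * ((n+1).choose j : ℤ)
        * (gaussBinomZ q (n+1-j) (((m+1:ℕ):ℤ) - j) : ℤ) with hf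
    set g : ℕ → ℤ := fun j => (-1 : ℤ) ^ j * (n.choose j : ℤ)
        * (gaussBinomZ q (n+1-j) ((m:ℤ)+1-j) : ℤ) with hg
    set s : ℕ → ℤ := fun j => (-1 : ℤ) ^ j * (n.choose j : ℤ)
        * (gaussBinomZ q (n-j) ((m:ℤ)-j) : ℤ) with hs
    have hfg : ∀ j, f (j+1) = g (j+1) - s j := by
      intro j
      simp only [hf, hg, hs]
      have i1 : n + 1 - (j+1) = n - j := by omega
      have i2 : ((m+1:ℕ):ℤ) - ((j+1:ℕ):ℤ) = (m:ℤ) - j := by push_cast; ring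
      have i3 : (m:ℤ)+1-((j+1:ℕ):ℤ) = (m:ℤ) - j := by push_cast; ring
      rw [i1, i2, i3, Nat.choose_succ_succ]
      push_cast
      ring
    have hf0 : f 0 = g 0 := by
      simp only [hf, hg]
      norm_num
    rw [Finset.sum_range_succ' f (n+1)]
    have hgsum : ∑ j ∈ Finset.range (n+1), g j
        = (∑ j ∈ Finset.range (n+1), g (j+1)) + g 0 := by
      have : ∑ j ∈ Finset.range (n+2), g j
          = (∑ j ∈ Finset.range (n+1), g (j+1)) + g 0 := Finset.sum_range_succ' g (n+1)
      rw [← this, Finset.sum_range_succ g (n+1)]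
      have : g (n+1) = 0 := by
        simp only [hg]
        rw [Nat.choose_succ_self]
        push_cast
        ring
      rw [this, add_zero]
    rw [hgsum]
    have : ∀ j ∈ Finset.range (n+1), f (j+1) = g (j+1) - s j := fun j _ => hfg j
    rw [Finset.sum_congr rfl this, Finset.sum_sub_distrib, hf0]
    ring
  rw [step, hA]
  ring

lemma Sf_nonneg (q : ℕ) (hq : 1 ≤ q) : ∀ n m, 0 ≤ Sf q n m := by
  intro n
  induction n with
  | zero =>
    intro m
    unfold Sf
    rw [Finset.sum_range_one]
    rcases Nat.eq_zero_or_pos m with h | h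
    · subst h; positivity
    · positivity
  | succ n ih =>
    intro m
    cases m with
    | zero => rw [Sf_zero]; norm_num
    | succ m =>
      rcases Nat.lt_or_ge n m with h | h
      · rw [Sf_of_gt q (n+1) (m+1) (by omega)]
      · rw [Sf_rec q n m h]
        have h1 := ih (m+1)
        have h2 := ih m
        have h3 : (1:ℤ) ≤ (q:ℤ) ^ (n-m) := one_le_pow₀ (by exact_mod_cast hq)
        nlinarith

/-- Nonnegativity of the alternating sum counting `r`-dimensional subspaces of
`F_q^k` whose set of contained standard unit vectors is exactly a fixed
`x`-element set. -/
theorem alternating_sum_nonneg (q k r x : ℕ) (hq : IsPrimePow q)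
    (hxr : x ≤ r) (hrk : r ≤ k) :
    0 ≤ ∑ j ∈ Finset.range (k - x + 1),
        (-1 : ℤ) ^ j * ((k - x).choose j : ℤ) *
          (gaussBinomZ q (k - x - j) ((r : ℤ) - x - j) : ℤ) := by
  have hq1 : 1 ≤ q := le_of_lt hq.one_lt
  have := Sf_nonneg q hq1 (k - x) (r - x)
  unfold Sf at this
  simp only [Nat.cast_sub hxr] at this
  exact this
end
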